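/- Let f : ℝ^d → ℝ be a differentiable convex nonnegative function with f(w*) = 0, let ε > 0, let 0 < μ ≤ L', and let g : ℝ^d → ℝ be a differentiable (1/L')-strongly convex, (1/μ)-smooth function with g ≥ 0, g(w*) = 0, and ⟨∇g(x), ∇f(z)⟩ ≥ (1−ε)⟨x − w*, z − w*⟩ for all x, z ∈ ℝ^d. Let η, α, δ > 0 with α ≤ 1, let v, w ∈ ℝ^d, set u = (αv + w)/(1+α), and let G be a random vector with E[G] = ∇f(u) and E[‖G‖²] ≤ 2L' f(u). Define w⁺ = u − ηG and v⁺ = (1−α)v + αu − δG. Then E[g(v⁺) + (δ(1−ε)/(2α))‖w⁺ − w*‖²] ≤ (1−α) g(v) + (1−α)(δ(1−ε)/(2α))‖w − w*‖² + (1/2)(α/μ − δ(1−ε))‖u − w*‖² + ((δ/α)(1−ε)(η²L' − η) + δ²L'/μ) f(u). -/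

import Mathlib

/-!
Write `p = (1 - α) v + α u`, so that `v⁺ = p - δ G`. Smoothness of `g` bounds `E g(v⁺)` by
`g p - δ ⟪∇g p, ∇f u⟫ + δ² E‖G‖² / (2μ)`; convexity of `g` and smoothness at its minimiser `w*`
bound `g p` by `(1 - α) g v + α ‖u - w*‖² / (2μ)`, and the correlation hypothesis turns
`⟪∇g p, ∇f u⟫` into `(1 - ε) ⟪p - w*, u - w*⟫`. Expanding `‖w⁺ - w*‖²` and using
`f u ≤ ⟪∇f u, u - w*⟫` handles the second term. The two estimates are glued by
`α (p - w*) = (u - w*) - (1 - α) (w - w*)` and `‖w - u‖² ≥ 0`. For `ε > 1` the hypotheses force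
`∇f = 0`, and then the whole space is `{w*}`.
-/

open MeasureTheory RealInnerProductSpace

section Gradient

variable {E : Type*} [NormedAddCommGroup E] [InnerProductSpace ℝ E]

theorem ConvexOn.add_inner_le_of_hasGradientAt [CompleteSpace E] {f : E → ℝ} {f' x z : E}
    (hf : ConvexOn ℝ Set.univ f) (hf' : HasGradientAt f f' z) :
    f z + ⟪f', x - z⟫ ≤ f x := by
  let ℓ : ℝ →ᵃ[ℝ] E := AffineMap.lineMap z x
  have hderiv : HasDerivAt (f ∘ ℓ) ⟪f', x - z⟫ 0 := by
    have hf'0 : HasFDerivAt f (InnerProductSpace.toDual ℝ E f') (ℓ 0) := by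
      simpa [ℓ] using hf'.hasFDerivAt
    simpa using hf'0.comp_hasDerivAt (0 : ℝ) AffineMap.hasDerivAt_lineMap
  have hslope := (hf.comp_affineMap ℓ).le_slope_of_hasDerivAt (Set.mem_univ 0) (Set.mem_univ 1)
    zero_lt_one hderiv
  simp only [slope_def_field, Function.comp_apply, ℓ, AffineMap.lineMap_apply_zero,
    AffineMap.lineMap_apply_one, sub_zero, div_one] at hslope
  linarith

theorem convexOn_univ_of_add_inner_le {g : E → ℝ} {g' : E → E}
    (hg : ∀ x z, g z + ⟪g' z, x - z⟫ ≤ g x) : ConvexOn ℝ Set.univ g := by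
  refine ⟨convex_univ, fun x _ y _ a b ha hb hab => ?_⟩
  set p := a • x + b • y
  have hbalance : a * ⟪g' p, x - p⟫ + b * ⟪g' p, y - p⟫ = 0 := by
    rw [← real_inner_smul_right, ← real_inner_smul_right, ← inner_add_right]
    have : a • (x - p) + b • (y - p) = 0 := by
      calc a • (x - p) + b • (y - p) = p - (a + b) • p := by module
        _ = 0 := by rw [hab, one_smul, sub_self]
    rw [this, inner_zero_right]
  have hx := mul_le_mul_of_nonneg_left (hg x p) ha
  have hy := mul_le_mul_of_nonneg_left (hg y p) hb
  show g p ≤ a * g x + b * g y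
  linear_combination hx + hy - hbalance - g p * hab

theorem HasGradientAt.eq_zero_of_forall_le [CompleteSpace E] {g : E → ℝ} {g' x₀ : E}
    (hg : HasGradientAt g g' x₀) (hmin : ∀ x, g x₀ ≤ g x) : g' = 0 := by
  simpa using IsLocalMin.hasFDerivAt_eq_zero (Filter.Eventually.of_forall hmin) hg.hasFDerivAt

theorem norm_sub_smul_sub_sq (u w y : E) (η : ℝ) :
    ‖(u - η • y) - w‖ ^ 2 = ‖u - w‖ ^ 2 + ⟪-(2 * η) • (u - w), y⟫ + η ^ 2 * ‖y‖ ^ 2 := by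
  rw [sub_right_comm, norm_sub_sq_real, real_inner_smul_left, norm_smul, real_inner_smul_right,
    Real.norm_eq_abs, mul_pow, sq_abs]
  ring

theorem norm_sub_sq_sub_mul_inner_le {α : ℝ} (hα : 1 + α ≠ 0) (hα1 : α ≤ 1) {u v w : E}
    (hu : u = (1 / (1 + α)) • (α • v + w)) (x : E) :
    ‖u - x‖ ^ 2 - 2 * α * ⟪(1 - α) • v + α • u - x, u - x⟫
      ≤ (1 - α) * ‖w - x‖ ^ 2 - α * ‖u - x‖ ^ 2 := by
  have hw : w = (1 + α) • u - α • v := by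
    rw [hu, smul_smul, mul_one_div_cancel hα, one_smul, add_sub_cancel_left]
  have hsplit : α • ((1 - α) • v + α • u - x) = (u - x) - (1 - α) • (w - x) := by
    rw [hw]
    module
  have hsq : 0 ≤ (1 - α) * ‖(w - x) - (u - x)‖ ^ 2 := mul_nonneg (by linarith) (sq_nonneg _)
  rw [norm_sub_sq_real] at hsq
  rw [mul_assoc, ← real_inner_smul_left, hsplit, inner_sub_left, real_inner_smul_left,
    real_inner_self_eq_norm_sq]
  linarith

theorem eq_of_one_lt_of_inner_gradient_le [CompleteSpace E] {g : E → ℝ} {g' f' : E → E}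
    {wstar : E} {ε L' : ℝ} (hε : 1 < ε) (hL' : 0 < L')
    (hgsc : ∀ x z, g z + ⟪g' z, x - z⟫ + (1 / L') / 2 * ‖x - z‖ ^ 2 ≤ g x)
    (hgmin : ∀ x, g wstar ≤ g x) (hf' : ∀ z, 0 ≤ ⟪f' z, z - wstar⟫)
    (hcorr : ∀ x z, (1 - ε) * ⟪x - wstar, z - wstar⟫ ≤ ⟪g' x, f' z⟫) (z : E) : z = wstar := by
  have hf'0 : ∀ y, f' y = 0 := by
    intro y
    -- strong convexity of `g` between `w* - f' y` and `w*`, against the correlation bound there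
    have hsc := hgsc wstar (wstar - f' y)
    have hc := hcorr (wstar - f' y) y
    rw [sub_sub_cancel] at hsc
    rw [sub_sub_cancel_left, inner_neg_left] at hc
    have hsign : 0 ≤ (ε - 1) * ⟪f' y, y - wstar⟫ := mul_nonneg (by linarith) (hf' y)
    have hnorm : (1 / L') / 2 * ‖f' y‖ ^ 2 ≤ 0 := by
      linarith [hgmin (wstar - f' y)]
    have : ‖f' y‖ ^ 2 ≤ 0 := nonpos_of_mul_nonpos_right hnorm (by positivity)
    simpa using this
  have h := hcorr (wstar - (z - wstar)) z
  rw [hf'0, inner_zero_right, sub_sub_cancel_left, inner_neg_left,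
    real_inner_self_eq_norm_sq] at h
  have : ‖z - wstar‖ ^ 2 ≤ 0 := nonpos_of_mul_nonpos_right (by linarith) (by linarith : 0 < ε - 1)
  simpa [sub_eq_zero] using this

end Gradient

section Expectation

variable {E : Type*} [NormedAddCommGroup E] [InnerProductSpace ℝ E]
  {Ω : Type*} [MeasurableSpace Ω] {P : Measure Ω} [IsProbabilityMeasure P] {G : Ω → E}

theorem integrable_add_inner_add_mul_norm_sq (hG : Integrable G P)
    (hG2 : Integrable (fun ω => ‖G ω‖ ^ 2) P) (a : ℝ) (b : E) (c : ℝ) :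
    Integrable (fun ω => a + ⟪b, G ω⟫ + c * ‖G ω‖ ^ 2) P :=
  ((integrable_const a).add (hG.const_inner b)).add (hG2.const_mul c)

theorem integral_add_inner_add_mul_norm_sq [CompleteSpace E] (hG : Integrable G P)
    (hG2 : Integrable (fun ω => ‖G ω‖ ^ 2) P) (a : ℝ) (b : E) (c : ℝ) :
    ∫ ω, (a + ⟪b, G ω⟫ + c * ‖G ω‖ ^ 2) ∂P
      = a + ⟪b, ∫ ω, G ω ∂P⟫ + c * ∫ ω, ‖G ω‖ ^ 2 ∂P := by
  have hlin : Integrable (fun ω => a + ⟪b, G ω⟫) P := (integrable_const a).add (hG.const_inner b)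
  rw [integral_add hlin (hG2.const_mul c), integral_add (integrable_const a) (hG.const_inner b),
    integral_const, integral_inner hG, integral_const_mul]
  simp

theorem integral_comp_sub_smul_le [CompleteSpace E] {g : E → ℝ} {g' : E → E} {K : ℝ}
    (hG : Integrable G P) (hG2 : Integrable (fun ω => ‖G ω‖ ^ 2) P) (hg : Continuous g)
    (hg0 : ∀ x, 0 ≤ g x)
    (hsmooth : ∀ x z, g x ≤ g z + ⟪g' z, x - z⟫ + K / 2 * ‖x - z‖ ^ 2) (p : E) (δ : ℝ) :
    Integrable (fun ω => g (p - δ • G ω)) P ∧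
      ∫ ω, g (p - δ • G ω) ∂P
        ≤ g p - δ * ⟪g' p, ∫ ω, G ω ∂P⟫ + K / 2 * δ ^ 2 * ∫ ω, ‖G ω‖ ^ 2 ∂P := by
  have hbound : ∀ ω, g (p - δ • G ω) ≤ g p + ⟪-δ • g' p, G ω⟫ + K / 2 * δ ^ 2 * ‖G ω‖ ^ 2 := by
    intro ω
    have h := hsmooth (p - δ • G ω) p
    rwa [sub_sub_cancel_left, inner_neg_right, real_inner_smul_right, norm_neg, norm_smul,
      Real.norm_eq_abs, mul_pow, sq_abs, ← mul_assoc, ← neg_mul, ← real_inner_smul_left] at h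
  have hint := integrable_add_inner_add_mul_norm_sq hG hG2 (g p) (-δ • g' p) (K / 2 * δ ^ 2)
  have hgint : Integrable (fun ω => g (p - δ • G ω)) P :=
    hint.mono' (hg.comp_aestronglyMeasurable (aestronglyMeasurable_const.sub
      (hG.aestronglyMeasurable.const_smul δ)))
      (Filter.Eventually.of_forall fun ω => (Real.norm_of_nonneg (hg0 _)).trans_le (hbound ω))
  refine ⟨hgint, ?_⟩
  calc ∫ ω, g (p - δ • G ω) ∂P
      ≤ ∫ ω, (g p + ⟪-δ • g' p, G ω⟫ + K / 2 * δ ^ 2 * ‖G ω‖ ^ 2) ∂P :=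
        integral_mono hgint hint hbound
    _ = _ := by
      rw [integral_add_inner_add_mul_norm_sq hG hG2, real_inner_smul_left]
      ring

theorem integral_norm_sub_smul_sub_sq [CompleteSpace E] (hG : Integrable G P)
    (hG2 : Integrable (fun ω => ‖G ω‖ ^ 2) P) (u w : E) (η : ℝ) :
    Integrable (fun ω => ‖(u - η • G ω) - w‖ ^ 2) P ∧
      ∫ ω, ‖(u - η • G ω) - w‖ ^ 2 ∂P
        = ‖u - w‖ ^ 2 - 2 * η * ⟪u - w, ∫ ω, G ω ∂P⟫ + η ^ 2 * ∫ ω, ‖G ω‖ ^ 2 ∂P := by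
  simp_rw [norm_sub_smul_sub_sq]
  refine ⟨integrable_add_inner_add_mul_norm_sq hG hG2 _ _ _, ?_⟩
  rw [integral_add_inner_add_mul_norm_sq hG hG2, real_inner_smul_left]
  ring

end Expectation

theorem mass_convex_one_step_general
    (d : ℕ)
    (f g : EuclideanSpace ℝ (Fin d) → ℝ)
    (f' g' : EuclideanSpace ℝ (Fin d) → EuclideanSpace ℝ (Fin d))
    (hf' : ∀ x, HasGradientAt f (f' x) x)
    (hg' : ∀ x, HasGradientAt g (g' x) x)
    (hfconv : ConvexOn ℝ Set.univ f)
    (hfnonneg : ∀ x, 0 ≤ f x)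
    (wstar : EuclideanSpace ℝ (Fin d)) (hfws : f wstar = 0)
    (ε : ℝ)
    (μ L' : ℝ) (hμ : 0 < μ) (hμL : μ ≤ L')
    (hgsc : ∀ x z, g z + ⟪g' z, x - z⟫ + (1 / L') / 2 * ‖x - z‖ ^ 2 ≤ g x)
    (hgsm : ∀ x z, g x ≤ g z + ⟪g' z, x - z⟫ + (1 / μ) / 2 * ‖x - z‖ ^ 2)
    (hgnonneg : ∀ x, 0 ≤ g x) (hgws : g wstar = 0)
    (hcorr : ∀ x z, (1 - ε) * ⟪x - wstar, z - wstar⟫ ≤ ⟪g' x, f' z⟫)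
    (η α δ : ℝ) (hη : 0 < η) (hα : 0 < α) (hα1 : α ≤ 1) (hδ : 0 < δ)
    (v w u : EuclideanSpace ℝ (Fin d)) (hu : u = (1 / (1 + α)) • (α • v + w))
    (Ω : Type) [MeasurableSpace Ω] (P : Measure Ω) [IsProbabilityMeasure P]
    (G : Ω → EuclideanSpace ℝ (Fin d))
    (hGint : Integrable G P)
    (hGsqint : Integrable (fun ω => ‖G ω‖ ^ 2) P)
    (hGmean : (∫ ω, G ω ∂P) = f' u)
    (hGsq : (∫ ω, ‖G ω‖ ^ 2 ∂P) ≤ 2 * L' * f u) :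
    (∫ ω, (g ((1 - α) • v + α • u - δ • G ω)
        + (δ * (1 - ε) / (2 * α)) * ‖(u - η • G ω) - wstar‖ ^ 2) ∂P)
      ≤ (1 - α) * g v + (1 - α) * (δ * (1 - ε) / (2 * α)) * ‖w - wstar‖ ^ 2
        + (1 / 2) * (α / μ - δ * (1 - ε)) * ‖u - wstar‖ ^ 2
        + ((δ / α) * (1 - ε) * (η ^ 2 * L' - η) + δ ^ 2 * L' / μ) * f u := by
  have hL' : 0 < L' := hμ.trans_le hμL
  have hgmin : ∀ x, g wstar ≤ g x := fun x => hgws ▸ hgnonneg x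
  have hf_le_inner : ∀ z, f z ≤ ⟪f' z, z - wstar⟫ := fun z => by
    have h := hfconv.add_inner_le_of_hasGradientAt (x := wstar) (hf' z)
    rw [hfws, ← neg_sub, inner_neg_right] at h
    linarith
  rcases lt_or_ge 1 ε with hε1 | hε1
  · have hpoint := eq_of_one_lt_of_inner_gradient_le hε1 hL' hgsc hgmin
      (fun z => (hfnonneg z).trans (hf_le_inner z)) hcorr
    have h0 : ∀ z : EuclideanSpace ℝ (Fin d), z = 0 := fun z =>
      (hpoint z).trans (hpoint 0).symm
    rw [h0 wstar] at hfws hgws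
    rw [h0 u, h0 v, h0 w, h0 wstar, show G = 0 from funext fun ω => h0 (G ω)]
    simp [hfws, hgws]
  set p := (1 - α) • v + α • u
  have hcα : 2 * α * (δ * (1 - ε) / (2 * α)) = δ * (1 - ε) := by field_simp
  have hgp : g p ≤ (1 - α) * g v + α * g u := by
    have hgconv := convexOn_univ_of_add_inner_le (g := g) (g' := g') fun x z =>
      (le_add_of_nonneg_right (by positivity)).trans (hgsc x z)
    exact hgconv.2 trivial trivial (by linarith) hα.le (by ring)
  have hgu : g u ≤ (1 / μ) / 2 * ‖u - wstar‖ ^ 2 := by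
    simpa [hgws, (hg' wstar).eq_zero_of_forall_le hgmin] using hgsm u wstar
  have hgeom := norm_sub_sq_sub_mul_inner_le (by positivity) hα1 hu wstar
  obtain ⟨hgint, hgexp⟩ := integral_comp_sub_smul_le hGint hGsqint
    (continuous_iff_continuousAt.2 fun x => (hg' x).continuousAt) hgnonneg hgsm p δ
  obtain ⟨hdint, hdexp⟩ := integral_norm_sub_smul_sub_sq hGint hGsqint u wstar η
  rw [integral_add hgint (hdint.const_mul _), integral_const_mul, hdexp, hGmean,
    real_inner_comm]
  rw [hGmean] at hgexp
  linear_combination hgexp + hgp + α * hgu + δ * hcorr p u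
    + 2 * (δ * (1 - ε) / (2 * α)) * η * hf_le_inner u
    + ((1 / μ) / 2 * δ ^ 2 + (δ * (1 - ε) / (2 * α)) * η ^ 2) * hGsq
    + (δ * (1 - ε) / (2 * α)) * hgeom
    + (⟪p - wstar, u - wstar⟫ - ‖u - wstar‖ ^ 2 / 2) * hcα

/-- One-step estimate for MaSS on general convex losses in the interpolation setting.
With `u = (αv + w)/(1+α)`, `w⁺ = u − ηG`, `v⁺ = (1−α)v + αu − δG`, where `G` is an unbiased
stochastic gradient at `u` with `E[‖G‖²] ≤ 2L'f(u)`: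
`E[g(v⁺) + (δ(1−ε)/(2α))‖w⁺ − w*‖²] ≤ (1−α)g(v) + (1−α)(δ(1−ε)/(2α))‖w − w*‖²
  + (1/2)(α/μ − δ(1−ε))‖u − w*‖² + ((δ/α)(1−ε)(η²L' − η) + δ²L'/μ) f(u)`. -/
theorem mass_convex_one_step
    (d : ℕ)
    (f g : EuclideanSpace ℝ (Fin d) → ℝ)
    (f' g' : EuclideanSpace ℝ (Fin d) → EuclideanSpace ℝ (Fin d))
    (hf' : ∀ x, HasGradientAt f (f' x) x)
    (hg' : ∀ x, HasGradientAt g (g' x) x)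
    (hfconv : ConvexOn ℝ Set.univ f)
    (hfnonneg : ∀ x, 0 ≤ f x)
    (wstar : EuclideanSpace ℝ (Fin d)) (hfws : f wstar = 0)
    (ε : ℝ) (hε : 0 < ε)
    (μ L' : ℝ) (hμ : 0 < μ) (hμL : μ ≤ L')
    (hgsc : ∀ x z, g z + ⟪g' z, x - z⟫ + (1 / L') / 2 * ‖x - z‖ ^ 2 ≤ g x)
    (hgsm : ∀ x z, g x ≤ g z + ⟪g' z, x - z⟫ + (1 / μ) / 2 * ‖x - z‖ ^ 2)
    (hgnonneg : ∀ x, 0 ≤ g x) (hgws : g wstar = 0)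
    (hcorr : ∀ x z, (1 - ε) * ⟪x - wstar, z - wstar⟫ ≤ ⟪g' x, f' z⟫)
    (η α δ : ℝ) (hη : 0 < η) (hα : 0 < α) (hα1 : α ≤ 1) (hδ : 0 < δ)
    (v w u : EuclideanSpace ℝ (Fin d)) (hu : u = (1 / (1 + α)) • (α • v + w))
    (Ω : Type) [MeasurableSpace Ω] (P : Measure Ω) [IsProbabilityMeasure P]
    (G : Ω → EuclideanSpace ℝ (Fin d))
    (hGint : Integrable G P)
    (hGsqint : Integrable (fun ω => ‖G ω‖ ^ 2) P)
    (hGmean : (∫ ω, G ω ∂P) = f' u)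
    (hGsq : (∫ ω, ‖G ω‖ ^ 2 ∂P) ≤ 2 * L' * f u) :
    (∫ ω, (g ((1 - α) • v + α • u - δ • G ω)
        + (δ * (1 - ε) / (2 * α)) * ‖(u - η • G ω) - wstar‖ ^ 2) ∂P)
      ≤ (1 - α) * g v + (1 - α) * (δ * (1 - ε) / (2 * α)) * ‖w - wstar‖ ^ 2
        + (1 / 2) * (α / μ - δ * (1 - ε)) * ‖u - wstar‖ ^ 2
        + ((δ / α) * (1 - ε) * (η ^ 2 * L' - η) + δ ^ 2 * L' / μ) * f u :=
  mass_convex_one_step_general d f g f' g' hf' hg' hfconv hfnonneg wstar hfws ε μ L' hμ hμL hgsc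
    hgsm hgnonneg hgws hcorr η α δ hη hα hα1 hδ v w u hu Ω P G hGint hGsqint hGmean hGsq
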